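/- arXiv:1403.2027 — 2 statements merged into one kernel-verified Lean document; each statement's English description precedes it below -/
import Mathlib

section
/- Let A be a ring, δ : A → A a derivation, and let 0 → E₀ → E₁ → E₂ → 0 be a short exact sequence of right A-modules with E₁ finitely generated projective. If E₂ carries a δ-connection ∇₂, then there exist δ-connections ∇₀ on E₀ and ∇₁ on E₁ such that both maps in the sequence are morphisms of modules with connection. -/
open MulOpposite

/-- Let `A` be a ring, `δ : A → A` a derivation, and let
`0 → E₀ → E₁ → E₂ → 0` be a short exact sequence of right `A`-modules with `E₁` finitely
generated projective.  If `E₂` carries a `δ`-connection `conn₂`, then there are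
`δ`-connections `conn₀` on `E₀` and `conn₁` on `E₁` such that both maps of the sequence are
morphisms of modules with connection.  (Right `A`-modules are encoded as modules over
`Aᵐᵒᵖ`, with `e·a = op a • e`.) -/
theorem ses_admits_compatible_connections
    {A : Type*} [Ring A] (δ : A → A)
    (hδ_add : ∀ a b : A, δ (a + b) = δ a + δ b)
    (hδ_mul : ∀ a b : A, δ (a * b) = δ a * b + a * δ b)
    {E₀ E₁ E₂ : Type*} [AddCommGroup E₀] [AddCommGroup E₁] [AddCommGroup E₂]
    [Module Aᵐᵒᵖ E₀] [Module Aᵐᵒᵖ E₁] [Module Aᵐᵒᵖ E₂]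
    [Module.Finite Aᵐᵒᵖ E₁] [Module.Projective Aᵐᵒᵖ E₁]
    (g : E₀ →ₗ[Aᵐᵒᵖ] E₁) (h : E₁ →ₗ[Aᵐᵒᵖ] E₂)
    (hg : Function.Injective g) (hh : Function.Surjective h)
    (hexact : LinearMap.range g = LinearMap.ker h)
    (conn₂ : E₂ → E₂)
    (hconn₂_add : ∀ e e' : E₂, conn₂ (e + e') = conn₂ e + conn₂ e')
    (hconn₂_leibniz : ∀ (e : E₂) (a : A), conn₂ (op a • e) = op a • conn₂ e + op (δ a) • e) :
    ∃ (conn₀ : E₀ → E₀) (conn₁ : E₁ → E₁),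
      (∀ e e' : E₀, conn₀ (e + e') = conn₀ e + conn₀ e') ∧
      (∀ (e : E₀) (a : A), conn₀ (op a • e) = op a • conn₀ e + op (δ a) • e) ∧
      (∀ e e' : E₁, conn₁ (e + e') = conn₁ e + conn₁ e') ∧
      (∀ (e : E₁) (a : A), conn₁ (op a • e) = op a • conn₁ e + op (δ a) • e) ∧
      (∀ e : E₀, g (conn₀ e) = conn₁ (g e)) ∧
      (∀ e : E₁, h (conn₁ e) = conn₂ (h e)) := by
  classical
  have hδ0 : δ 0 = 0 := by
    have := hδ_add 0 0; simpa using this.symm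
  -- the opposite derivation
  set Δ : Aᵐᵒᵖ → Aᵐᵒᵖ := fun c => op (δ (unop c)) with hΔ
  have hΔ0 : Δ 0 = 0 := by simp [hΔ, hδ0]
  have hΔadd : ∀ c d : Aᵐᵒᵖ, Δ (c + d) = Δ c + Δ d := fun c d => by
    simp [hΔ, hδ_add]
  have hΔmul : ∀ (a : A) (c : Aᵐᵒᵖ), Δ (op a * c) = op a * Δ c + op (δ a) * c := by
    intro a c
    have h1 : unop (op a * c) = unop c * a := rfl
    simp only [hΔ, h1, hδ_mul, op_add, op_mul, op_unop]
  -- dual basis from projectivity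
  obtain ⟨s, hs⟩ := (Module.projective_def.mp ‹Module.Projective Aᵐᵒᵖ E₁›)
  -- Grassmann connection on E₁
  set D₀ : E₁ → E₁ := fun e => (s e).sum fun x c => Δ c • x with hD₀
  have hD₀add : ∀ e e' : E₁, D₀ (e + e') = D₀ e + D₀ e' := by
    intro e e'
    simp only [hD₀, map_add]
    rw [Finsupp.sum_add_index']
    · intro x; simp [hΔ0]
    · intro x c d; rw [hΔadd, add_smul]
  have hD₀leib : ∀ (e : E₁) (a : A), D₀ (op a • e) = op a • D₀ e + op (δ a) • e := by
    intro e a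
    have he : ((s e).sum fun x c => c • x) = e := by
      conv_rhs => rw [← hs e]
      simp [Finsupp.linearCombination_apply]
    simp only [hD₀, map_smul]
    rw [Finsupp.sum_smul_index' (fun x => by simp [hΔ0])]
    calc ((s e).sum fun x c => Δ (op a • c) • x)
        = (s e).sum fun x c => op a • Δ c • x + op (δ a) • c • x := by
          refine Finsupp.sum_congr fun x _ => ?_
          rw [smul_eq_mul, hΔmul, add_smul, mul_smul, mul_smul]
      _ = (op a • (s e).sum fun x c => Δ c • x) + op (δ a) • (s e).sum fun x c => c • x := by
          rw [Finsupp.sum_add, Finsupp.smul_sum, Finsupp.smul_sum]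
      _ = (op a • (s e).sum fun x c => Δ c • x) + op (δ a) • e := by rw [he]
  -- correction term
  have hDlin : ∃ L : E₁ →ₗ[Aᵐᵒᵖ] E₂,
      ∀ e : E₁, L e = conn₂ (h e) - h (D₀ e) := by
    refine ⟨{ toFun := fun e => conn₂ (h e) - h (D₀ e), map_add' := ?_, map_smul' := ?_ }, fun _ => rfl⟩
    · intro e e'; simp only [map_add, hconn₂_add, hD₀add]; abel
    · intro c e
      rw [← op_unop c]
      simp only [map_smul, hconn₂_leibniz, hD₀leib (a := unop c), map_add, map_smul,
        RingHom.id_apply, smul_sub]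
      abel
  obtain ⟨L, hL⟩ := hDlin
  obtain ⟨Lift, hLift⟩ := Module.projective_lifting_property h L hh
  set conn₁ : E₁ → E₁ := fun e => D₀ e + Lift e with hconn₁
  have hconn₁add : ∀ e e' : E₁, conn₁ (e + e') = conn₁ e + conn₁ e' := by
    intro e e'; simp only [hconn₁, hD₀add, map_add]; abel
  have hconn₁leib : ∀ (e : E₁) (a : A), conn₁ (op a • e) = op a • conn₁ e + op (δ a) • e := by
    intro e a; simp only [hconn₁, hD₀leib, map_smul, smul_add]; abel
  have hcompat : ∀ e : E₁, h (conn₁ e) = conn₂ (h e) := by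
    intro e
    have : h (Lift e) = L e := by rw [← hLift]; rfl
    simp only [hconn₁, map_add, this, hL]; abel
  -- connection on E₀ by restriction
  have hconn₂0 : conn₂ 0 = 0 := by
    have := hconn₂_add 0 0; simpa using this.symm
  have key : ∀ e : E₀, ∃ x : E₀, g x = conn₁ (g e) := by
    intro e
    have : conn₁ (g e) ∈ LinearMap.ker h := by
      rw [LinearMap.mem_ker, hcompat]
      have : h (g e) = 0 := by
        rw [← LinearMap.mem_ker, ← hexact]; exact ⟨e, rfl⟩
      rw [this, hconn₂0]
    rw [← hexact] at this
    exact this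
  set conn₀ : E₀ → E₀ := fun e => (key e).choose with hconn₀
  have hconn₀spec : ∀ e : E₀, g (conn₀ e) = conn₁ (g e) := fun e => (key e).choose_spec
  refine ⟨conn₀, conn₁, ?_, ?_, hconn₁add, hconn₁leib, hconn₀spec, hcompat⟩
  · intro e e'
    apply hg
    rw [hconn₀spec, map_add, map_add, hconn₀spec, hconn₀spec, hconn₁add]
  · intro e a
    apply hg
    rw [hconn₀spec, map_add, map_smul, map_smul, hconn₀spec, map_smul, hconn₁leib]
end

section
/- The heart D^{≤0} ∩ D^{≥0} of a t-structure on a triangulated category is an abelian category, where kernels and cokernels are computed via truncations of mapping cones. -/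
open CategoryTheory Limits Pretriangulated

universe v u

variable (D : Type u) [Category.{v} D] [Preadditive D] [HasZeroObject D] [HasShift D ℤ]
  [∀ n : ℤ, (CategoryTheory.shiftFunctor D n).Additive] [Pretriangulated D]

/-- A t-structure on a triangulated category `D`, in the classical (BBD) formulation: a
pair of strictly full subcategories `(D^{≤0}, D^{≥0})` (given as iso-closed sets `le`, `ge`
of objects) such that (i) `D^{≤0}[1] ⊆ D^{≤0}` and `D^{≥0}[-1] ⊆ D^{≥0}`;
(ii) `Hom(X, Y[-1]) = 0` for `X ∈ D^{≤0}`, `Y ∈ D^{≥0}`; (iii) every object `X` sits in a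
distinguished triangle `X₀ → X → X₁ → X₀[1]` with `X₀ ∈ D^{≤0}` and `X₁ ∈ D^{≥0}[-1]`. -/
structure ClassicalTStructure where
  le : Set D
  ge : Set D
  le_iso : ∀ {X Y : D}, (X ≅ Y) → X ∈ le → Y ∈ le
  ge_iso : ∀ {X Y : D}, (X ≅ Y) → X ∈ ge → Y ∈ ge
  le_shift : ∀ X ∈ le, X⟦(1 : ℤ)⟧ ∈ le
  ge_shift : ∀ X ∈ ge, X⟦(-1 : ℤ)⟧ ∈ ge
  hom_zero : ∀ ⦃X Y : D⦄, X ∈ le → Y ∈ ge → ∀ f : X ⟶ Y⟦(-1 : ℤ)⟧, f = 0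
  exists_triangle : ∀ X : D, ∃ (X₀ X₁ : D) (f : X₀ ⟶ X) (g : X ⟶ X₁) (h : X₁ ⟶ X₀⟦(1 : ℤ)⟧),
    X₀ ∈ le ∧ X₁⟦(1 : ℤ)⟧ ∈ ge ∧ Triangle.mk f g h ∈ distTriang D

/-!
The heart `𝒜` of a t-structure is a full additive subcategory with `Hom(A, B⟦n⟧) = 0` for `n < 0`.
The cone `Z` of a morphism `f : X ⟶ Y` of `𝒜` lies in `D^{≤0} ∩ D^{≥-1}`, so its truncation
triangle reads `K⟦1⟧ ⟶ Z ⟶ Q ⟶ K⟦2⟧` with `K, Q ∈ 𝒜`, and the long exact `Hom`-sequences show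
that `K` is a kernel and `Q` a cokernel of `f`. If `f` is a monomorphism, its kernel `K` vanishes,
so `Z ≅ Q` lies in `𝒜` and `X ⟶ Y ⟶ Z` exhibits `f` as the kernel of `Y ⟶ Z`; dually every
epimorphism is a cokernel. Hence `𝒜` is abelian.
-/

namespace CategoryTheory

open Category ZeroObject

namespace ObjectProperty

variable {C : Type*} [Category C] [HasZeroObject C] [Preadditive C] [HasShift C ℤ]
  [∀ n : ℤ, (shiftFunctor C n).Additive] [Pretriangulated C]

instance isClosedUnderBinaryProducts_of_isTriangulatedClosed₂ (P : ObjectProperty C)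
    [P.IsTriangulatedClosed₂] [P.IsClosedUnderIsomorphisms] :
    P.IsClosedUnderBinaryProducts where
  limitsOfShape_le := by
    rintro X ⟨p⟩
    refine P.prop_of_iso ?_ (P.ext_of_isTriangulatedClosed₂ _
      (binaryProductTriangle_distinguished _ _)
      (p.prop_diag_obj (.mk .left)) (p.prop_diag_obj (.mk .right)))
    exact IsLimit.conePointUniqueUpToIso (prodIsProd _ _)
      ((IsLimit.postcomposeHomEquiv (diagramIsoPair p.diag) _).2 p.isLimit)

end ObjectProperty

namespace Triangulated.AbelianSubcategory

variable {C A : Type*} [Category C] [HasZeroObject C] [Preadditive C] [HasShift C ℤ]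
  [∀ n : ℤ, (shiftFunctor C n).Additive] [Pretriangulated C]
  [Category A] [Preadditive A] {ι : A ⥤ C} [ι.Full] [ι.Faithful] [ι.Additive]
  (hι : ∀ ⦃X Y : A⦄ ⦃n : ℤ⦄ (f : ι.obj X ⟶ (ι.obj Y)⟦n⟧), n < 0 → f = 0)
  (hA : admissibleMorphism ι = ⊤)

include hι hA

lemma exists_distinguished_triangle_of_mono {X₁ X₂ : A} (i : X₁ ⟶ X₂) [Mono i] :
    ∃ (X₃ : A) (π : X₂ ⟶ X₃) (δ : ι.obj X₃ ⟶ (ι.obj X₁)⟦(1 : ℤ)⟧),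
      Triangle.mk (ι.map i) (ι.map π) δ ∈ distTriang C := by
  obtain ⟨X₃, f₂, f₃, hT⟩ := distinguished_cocone_triangle (ι.map i)
  obtain ⟨K, Q, α, β, γ, hT'⟩ := (hA ▸ trivial : admissibleMorphism ι i) f₂ f₃ hT
  have := mono_ιK hι hT hT'
  have hK : IsZero K := by
    rw [IsZero.iff_id_eq_zero, ← cancel_mono (ιK f₃ α), ← cancel_mono i, assoc, ιK_mor₁ hT]
    simp
  have : IsIso β := (Triangle.isZero₁_iff_isIso₂ _ hT').1
    ((shiftFunctor C (1 : ℤ)).map_isZero (ι.map_isZero hK))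
  refine ⟨Q, πQ f₂ β, inv β ≫ f₃, isomorphic_distinguished _ hT _ ?_⟩
  exact Triangle.isoMk _ _ (Iso.refl _) (Iso.refl _) (asIso β).symm
    (by simp [Triangle.mk]) (by simp [Triangle.mk]) (by simp [Triangle.mk])

variable [HasFiniteProducts A]

lemma isNormalMonoCategory : IsNormalMonoCategory A where
  normalMonoOfMono i _ := by
    obtain ⟨X₃, π, δ, hT⟩ := exists_distinguished_triangle_of_mono hι hA i
    exact ⟨⟨X₃, π, _, isLimitKernelForkOfDistTriang hι i π δ hT⟩⟩

lemma isNormalEpiCategory : IsNormalEpiCategory A where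
  normalEpiOfEpi π _ := by
    obtain ⟨X₁, i, δ, hT⟩ := exists_distinguished_triangle_of_epi hι hA π
    exact ⟨⟨X₁, i, _, isColimitCokernelCoforkOfDistTriang hι i π δ hT⟩⟩

/-- Unlike `AbelianSubcategory.abelian`, this does not need the octahedral axiom. -/
noncomputable abbrev abelianOfAdmissible : Abelian A :=
  have : HasKernels A := ⟨fun f ↦ hasKernel_of_admissibleMorphism hι f (hA ▸ trivial)⟩
  have : HasCokernels A := ⟨fun f ↦ hasCokernel_of_admissibleMorphism hι f (hA ▸ trivial)⟩
  have := isNormalMonoCategory hι hA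
  have := isNormalEpiCategory hι hA
  {}

end Triangulated.AbelianSubcategory

namespace Triangulated.TStructure

variable {C : Type*} [Category C] [HasZeroObject C] [Preadditive C] [HasShift C ℤ]
  [∀ n : ℤ, (shiftFunctor C n).Additive] [Pretriangulated C] (t : TStructure C)

instance : t.heart.ContainsZero where
  exists_zero := ⟨0, isZero_zero C, (t.mem_heart_iff 0).2 ⟨inferInstance, inferInstance⟩⟩

instance : t.heart.IsTriangulatedClosed₂ :=
  .mk' fun T hT h₁ h₃ ↦ (t.mem_heart_iff _).2
    ⟨t.isLE₂ T hT 0 ⟨h₁.1⟩ ⟨h₃.1⟩, t.isGE₂ T hT 0 ⟨h₁.2⟩ ⟨h₃.2⟩⟩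

instance : HasFiniteProducts t.heart.FullSubcategory :=
  have : t.heart.IsClosedUnderFiniteProducts := .mk'
  inferInstance

lemma exists_distTriang_of_isLE_zero_of_isGE_neg_one (Z : C) [t.IsLE Z 0] [t.IsGE Z (-1)] :
    ∃ (K Q : C) (α : K⟦(1 : ℤ)⟧ ⟶ Z) (β : Z ⟶ Q) (γ : Q ⟶ K⟦(1 : ℤ)⟧⟦(1 : ℤ)⟧),
      t.heart K ∧ t.heart Q ∧ Triangle.mk α β γ ∈ distTriang C := by
  obtain ⟨U, Q, hU, hQ, a, b, c, hT⟩ := t.exists_triangle Z (-1) 0 (by lia)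
  have : t.IsLE U (-1) := ⟨hU⟩
  have : t.IsGE Q 0 := ⟨hQ⟩
  have : t.IsLE (U⟦(1 : ℤ)⟧) (-2) := t.isLE_shift U (-1) 1 (-2)
  have : t.IsLE Q 0 :=
    t.isLE₂ _ (rot_of_distTriang _ hT) 0 ‹_› (t.isLE_of_le (U⟦(1 : ℤ)⟧) (-2) 0)
  have : t.IsGE (Q⟦(-1 : ℤ)⟧) 1 := t.isGE_shift Q 0 (-1) 1
  have : t.IsGE U (-1) := t.isGE₂ _ (inv_rot_of_distTriang _ hT) (-1)
    (t.isGE_of_ge (Q⟦(-1 : ℤ)⟧) (-1) 1) ‹_›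
  let e : U⟦(-1 : ℤ)⟧⟦(1 : ℤ)⟧ ≅ U := (shiftFunctorCompIsoId C (-1) 1 (by lia)).app U
  refine ⟨U⟦(-1 : ℤ)⟧, Q, e.hom ≫ a, b, c ≫ e.inv⟦(1 : ℤ)⟧',
    (t.mem_heart_iff _).2 ⟨t.isLE_shift U (-1) (-1) 0, t.isGE_shift U (-1) (-1) 0⟩,
    (t.mem_heart_iff _).2 ⟨‹_›, ‹_›⟩, isomorphic_distinguished _ hT _ ?_⟩
  exact Triangle.isoMk _ _ e (Iso.refl _) (Iso.refl _) (by simp [Triangle.mk])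
    (by simp [Triangle.mk]) (by simp [Triangle.mk])

lemma hom_heart_shift_eq_zero {X Y : t.heart.FullSubcategory} {n : ℤ}
    (f : X.obj ⟶ Y.obj⟦n⟧) (hn : n < 0) : f = 0 :=
  have : t.IsLE X.obj 0 := ⟨X.property.1⟩
  have : t.IsGE Y.obj 0 := ⟨Y.property.2⟩
  have : t.IsGE (Y.obj⟦n⟧) (-n) := t.isGE_shift Y.obj 0 n (-n)
  t.zero f 0 (-n)

lemma admissibleMorphism_heart_eq_top :
    AbelianSubcategory.admissibleMorphism t.heart.ι = ⊤ := by
  ext X₁ X₂ f₁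
  simp only [MorphismProperty.top_apply, iff_true]
  intro X₃ f₂ f₃ hT
  have : t.IsLE X₁.obj 0 := ⟨X₁.property.1⟩
  have : t.IsGE X₁.obj 0 := ⟨X₁.property.2⟩
  have : t.IsLE X₂.obj 0 := ⟨X₂.property.1⟩
  have : t.IsGE X₂.obj 0 := ⟨X₂.property.2⟩
  have : t.IsLE (X₁.obj⟦(1 : ℤ)⟧) (-1) := t.isLE_shift X₁.obj 0 1 (-1)
  have : t.IsLE X₃ 0 :=
    t.isLE₂ _ (rot_of_distTriang _ hT) 0 ‹_› (t.isLE_of_le (X₁.obj⟦(1 : ℤ)⟧) (-1) 0)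
  have : t.IsGE X₃ (-1) := t.isGE₂ _ (rot_of_distTriang _ hT) (-1)
    (t.isGE_of_ge X₂.obj (-1) 0) (t.isGE_shift X₁.obj 0 1 (-1))
  obtain ⟨K, Q, α, β, γ, hK, hQ, hT'⟩ := t.exists_distTriang_of_isLE_zero_of_isGE_neg_one X₃
  exact ⟨⟨K, hK⟩, ⟨Q, hQ⟩, α, β, γ, hT'⟩

noncomputable abbrev abelianHeart : Abelian t.heart.FullSubcategory :=
  AbelianSubcategory.abelianOfAdmissible (fun _ _ _ ↦ t.hom_heart_shift_eq_zero)
    t.admissibleMorphism_heart_eq_top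

end Triangulated.TStructure

end CategoryTheory

namespace ClassicalTStructure

variable {D} (t : ClassicalTStructure D)

def toTStructure : Triangulated.TStructure D where
  le n X := X⟦n⟧ ∈ t.le
  ge n X := X⟦n⟧ ∈ t.ge
  le_isClosedUnderIsomorphisms n := ⟨fun e ↦ t.le_iso ((shiftFunctor D n).mapIso e)⟩
  ge_isClosedUnderIsomorphisms n := ⟨fun e ↦ t.ge_iso ((shiftFunctor D n).mapIso e)⟩
  le_shift n a n' h X := t.le_iso ((shiftFunctorAdd' D a n' n h).app X)
  ge_shift n a n' h X := t.ge_iso ((shiftFunctorAdd' D a n' n h).app X)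
  zero' X Y f hX hY := by
    let e : Y ≅ Y⟦(1 : ℤ)⟧⟦(-1 : ℤ)⟧ := (shiftFunctorCompIsoId D 1 (-1) (by lia)).symm.app Y
    rw [← cancel_mono e.hom, zero_comp]
    exact t.hom_zero (t.le_iso ((shiftFunctorZero D ℤ).app X) hX) hY _
  le_zero_le X hX :=
    t.le_iso ((shiftFunctorAdd' D 0 1 1 (by lia)).symm.app X) (t.le_shift _ hX)
  ge_one_le X hX :=
    t.ge_iso ((shiftFunctorAdd' D 1 (-1) 0 (by lia)).symm.app X) (t.ge_shift _ hX)
  exists_triangle_zero_one A := by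
    obtain ⟨X, Y, f, g, h, hX, hY, hT⟩ := t.exists_triangle A
    exact ⟨X, Y, t.le_iso ((shiftFunctorZero D ℤ).symm.app X) hX, hY, f, g, h, hT⟩

lemma toTStructure_heart : t.toTStructure.heart = fun X ↦ X ∈ t.le ∧ X ∈ t.ge := by
  ext X
  let e : X⟦(0 : ℤ)⟧ ≅ X := (shiftFunctorZero D ℤ).app X
  exact and_congr ⟨t.le_iso e, t.le_iso e.symm⟩ ⟨t.ge_iso e, t.ge_iso e.symm⟩

end ClassicalTStructure

/-- the heart `D^{≤0} ∩ D^{≥0}` of a t-structure on a triangulated category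
is an abelian category (where kernels and cokernels are computed via truncations of
mapping cones). -/
theorem heart_is_abelian (t : ClassicalTStructure D) :
    Nonempty (Abelian (ObjectProperty.FullSubcategory (fun X : D => X ∈ t.le ∧ X ∈ t.ge))) := by
  rw [← t.toTStructure_heart]
  exact ⟨t.toTStructure.abelianHeart⟩
end
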